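/- (Key equivalence in the proof of Theorem 2 of the paper.) Let V be a finite type, W : V → V → ℝ a row-stochastic matrix, α ∈ (0,1), and u ∈ V with W u u = 0. Let A* ⊆ V be a set with σ := ∑_{m ∈ A*} W u m < 1, let W_{A*} be the renormalized-deletion matrix of W at u with respect to A*, and let W_r be the matrix obtained from W by replacing row u with the zero row. Then for all rec, rec* ∈ V with rec ≠ u, rec* ≠ u, W u rec = 0 and W u rec* = 0: PPR_{W_{A*}}(u, rec) < PPR_{W_{A*}}(u, rec*) if and only if ∑_{n ∉ A*} W u n · ( PPR_{W_r}(n, rec) − PPR_{W_r}(n, rec*) ) < 0. In particular, whether rec* outranks rec after removing the edges into A* can be decided solely from Personalized PageRank scores computed in the single graph with all outgoing edges of u removed and the original (unrenormalized) weights W u n. -/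

import Mathlib

open scoped BigOperators

/-- A matrix is row-stochastic if all entries are nonnegative and each row sums to exactly 1. -/
def RowStochastic {V : Type*} [Fintype V] (W : Matrix V V ℝ) : Prop :=
  (∀ i j, 0 ≤ W i j) ∧ ∀ i, ∑ j, W i j = 1

/-- Personalized PageRank: `PPR W α s v = α * ∑' l, (1-α)^l * (W^l) s v`. -/
noncomputable def PPR {V : Type*} [Fintype V] [DecidableEq V]
    (W : Matrix V V ℝ) (α : ℝ) (s v : V) : ℝ :=
  α * ∑' l : ℕ, (1 - α) ^ l * (W ^ l) s v

/-- `zeroRow W u` is `W` with row `u` replaced by the zero row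
(removal of all outgoing edges of `u`). -/
def zeroRow {V : Type*} [DecidableEq V] (W : Matrix V V ℝ) (u : V) : Matrix V V ℝ :=
  fun n m => if n = u then 0 else W n m

/-- The renormalized-deletion matrix of `W` at `u` with respect to `A`: it agrees with `W`
outside row `u`; in row `u`, the entries into `A` are set to `0` and the remaining entries
are renormalized by `1 - ∑ x ∈ A, W u x`. -/
noncomputable def renormDel {V : Type*} [Fintype V] [DecidableEq V]
    (W : Matrix V V ℝ) (u : V) (A : Finset V) : Matrix V V ℝ :=
  fun n m =>
    if n = u then (if m ∈ A then 0 else W u m / (1 - ∑ x ∈ A, W u x)) else W n m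

/-!
Write `G_S = ∑ₗ ((1-α) S)ˡ = (1 - (1-α) S)⁻¹`, so that `PPR_S = α G_S`. The matrices
`M = W_{A*}` and `Z = W_r` differ only in row `u`, where `Z` vanishes, so the resolvent identity
`G_M - G_Z = G_M ((1-α) M - (1-α) Z) G_Z` evaluated at `(u, v)` with `v ≠ u` reads
`G_M(u,v) = (1-α) G_M(u,u) ∑ₖ M(u,k) G_Z(k,v)`: a walk from `u` is split at its last visit
to `u`. Since `G_M(u,u) > 0` and `M(u,k) = W(u,k)/(1-σ)` off `A*`, the comparison of
`PPR_M(u,rec)` with `PPR_M(u,rec*)` is the comparison of `∑_{n ∉ A*} W(u,n) PPR_Z(n,·)`.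
-/

theorem sub_eq_mul_sub_mul_of_mul_one_sub_eq_one {R : Type*} [Ring R] {G₁ G₂ T₁ T₂ : R}
    (h₁ : G₁ * (1 - T₁) = 1) (h₂ : (1 - T₂) * G₂ = 1) :
    G₁ - G₂ = G₁ * (T₁ - T₂) * G₂ := by
  calc G₁ - G₂ = G₁ * ((1 - T₂) * G₂) - G₁ * (1 - T₁) * G₂ := by
        rw [h₁, h₂, mul_one, one_mul]
    _ = G₁ * (T₁ - T₂) * G₂ := by noncomm_ring

namespace Matrix

variable {V R : Type*} [Fintype V]

theorem mul_mul_apply_of_forall_ne_eq_zero [NonUnitalSemiring R] {A D B : Matrix V V R} {u : V}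
    (hD : ∀ i ≠ u, D i = 0) (s v : V) : (A * D * B) s v = A s u * (D * B) u v := by
  rw [Matrix.mul_assoc, mul_apply, Finset.sum_eq_single u]
  · intro i _ hi
    simp [mul_apply, hD i hi]
  · simp

theorem tsum_apply {ι m n : Type*} [AddCommMonoid R] [TopologicalSpace R] [T2Space R]
    {f : ι → Matrix m n R} (hf : Summable f) (i : m) (j : n) :
    (∑' l, f l) i j = ∑' l, f l i j :=
  (congrFun (_root_.tsum_apply hf) j).trans (_root_.tsum_apply (Pi.summable.1 hf i))

theorem row_eq_of_one_sub_mul_eq_one [DecidableEq V] [Ring R] {T G : Matrix V V R} {u : V}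
    (hT : T u = 0) (h : (1 - T) * G = 1) : G u = (1 : Matrix V V R) u := by
  have hG : G = 1 + T * G := by rw [← h]; noncomm_ring
  ext v
  rw [hG, add_apply, mul_apply]
  simp [hT]

theorem apply_eq_mul_sum_of_eq_off_row [DecidableEq V] [CommRing R] {S Z G H : Matrix V V R}
    {x : R} {u v : V}
    (hG : G * (1 - x • S) = 1) (hH : (1 - x • Z) * H = 1) (hZ : Z u = 0)
    (hSZ : ∀ i ≠ u, S i = Z i) (hvu : v ≠ u) :
    G u v = x * G u u * ∑ k, S u k * H k v := by
  have hres := congrArg (fun A : Matrix V V R => A u v)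
    (sub_eq_mul_sub_mul_of_mul_one_sub_eq_one hG hH)
  have hD : ∀ i ≠ u, (x • S - x • Z) i = 0 := fun i hi => by
    ext j; simp [hSZ i hi]
  have hxZ : (x • Z) u = 0 := by rw [show (x • Z) u = x • Z u from rfl, hZ, smul_zero]
  simp only [sub_apply, mul_mul_apply_of_forall_ne_eq_zero hD, row_eq_of_one_sub_mul_eq_one hxZ hH,
    one_apply_ne hvu.symm, sub_zero] at hres
  rw [hres, mul_apply, mul_assoc, Finset.mul_sum, Finset.mul_sum, Finset.mul_sum]
  refine Finset.sum_congr rfl fun k _ => ?_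
  simp only [sub_apply, smul_apply, congrFun hZ k, Pi.zero_apply, smul_eq_mul]
  ring

end Matrix

def RowSubstochastic {V : Type*} [Fintype V] (S : Matrix V V ℝ) : Prop :=
  (∀ i j, 0 ≤ S i j) ∧ ∀ i, ∑ j, S i j ≤ 1

theorem RowStochastic.rowSubstochastic {V : Type*} [Fintype V] {S : Matrix V V ℝ}
    (hS : RowStochastic S) : RowSubstochastic S :=
  ⟨hS.1, fun i => (hS.2 i).le⟩

namespace RowSubstochastic

variable {V : Type*} [Fintype V] {S T : Matrix V V ℝ} {α : ℝ}

theorem mul (hS : RowSubstochastic S) (hT : RowSubstochastic T) : RowSubstochastic (S * T) := by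
  refine ⟨fun i j => Finset.sum_nonneg fun k _ => mul_nonneg (hS.1 i k) (hT.1 k j), fun i => ?_⟩
  calc ∑ j, (S * T) i j = ∑ k, S i k * ∑ j, T k j := by
        simp only [Matrix.mul_apply, Finset.mul_sum]; exact Finset.sum_comm
    _ ≤ ∑ k, S i k * 1 := by gcongr with k; exacts [hS.1 i k, hT.2 k]
    _ ≤ 1 := by simpa using hS.2 i

theorem apply_le_one (hS : RowSubstochastic S) (i j : V) : S i j ≤ 1 :=
  (Finset.single_le_sum (fun k _ => hS.1 i k) (Finset.mem_univ j)).trans (hS.2 i)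

variable [DecidableEq V]

theorem one : RowSubstochastic (1 : Matrix V V ℝ) :=
  ⟨fun i j => by rw [Matrix.one_apply]; split_ifs <;> norm_num,
    fun i => by simp [Matrix.one_apply]⟩

theorem pow (hS : RowSubstochastic S) (l : ℕ) : RowSubstochastic (S ^ l) := by
  induction l with
  | zero => exact one
  | succ l ih => rw [pow_succ]; exact ih.mul hS

theorem zeroRow (hS : RowSubstochastic S) (u : V) : RowSubstochastic (zeroRow S u) := by
  refine ⟨fun i j => ?_, fun i => ?_⟩ <;> by_cases hi : i = u <;>
    simp [_root_.zeroRow, hi, hS.1, hS.2]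

theorem summable_apply (hS : RowSubstochastic S) {x : ℝ} (hx₀ : 0 ≤ x) (hx₁ : x < 1)
    (i j : V) :
    Summable fun l : ℕ => x ^ l * (S ^ l) i j :=
  Summable.of_nonneg_of_le (fun l => mul_nonneg (pow_nonneg hx₀ l) ((hS.pow l).1 i j))
    (fun l => mul_le_of_le_one_right (pow_nonneg hx₀ l) ((hS.pow l).apply_le_one i j))
    (summable_geometric_of_lt_one hx₀ hx₁)

theorem summable_smul_pow (hS : RowSubstochastic S) {x : ℝ} (hx₀ : 0 ≤ x) (hx₁ : x < 1) :
    Summable fun l : ℕ => (x • S) ^ l :=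
  Pi.summable.2 fun i => Pi.summable.2 fun j => by
    simpa [smul_pow] using hS.summable_apply hx₀ hx₁ i j

theorem PPR_eq_mul_tsum_apply (hS : RowSubstochastic S) (hα : α ∈ Set.Ioo (0 : ℝ) 1)
    (s v : V) : PPR S α s v = α * (∑' l : ℕ, ((1 - α) • S) ^ l) s v := by
  have hsum := hS.summable_smul_pow (x := 1 - α) (by linarith [hα.2]) (by linarith [hα.1])
  rw [Matrix.tsum_apply hsum]
  simp [PPR, smul_pow]

theorem le_PPR_self (hS : RowSubstochastic S) (hα : α ∈ Set.Ioo (0 : ℝ) 1) (s : V) :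
    α ≤ PPR S α s s := by
  have hx₀ : 0 ≤ 1 - α := by linarith [hα.2]
  have h := (hS.summable_apply hx₀ (by linarith [hα.1]) s s).le_tsum 0
    fun l _ => mul_nonneg (pow_nonneg hx₀ l) ((hS.pow l).1 s s)
  simp only [pow_zero, Matrix.one_apply_eq, mul_one] at h
  unfold PPR
  nlinarith [hα.1]

theorem PPR_eq_sum_PPR_zeroRow (hS : RowSubstochastic S) (hα : α ∈ Set.Ioo (0 : ℝ) 1)
    {u v : V} (hvu : v ≠ u) :
    α * PPR S α u v =
      (1 - α) * PPR S α u u * ∑ k, S u k * PPR (_root_.zeroRow S u) α k v := by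
  have hx₀ : 0 ≤ 1 - α := by linarith [hα.2]
  have hx₁ : 1 - α < 1 := by linarith [hα.1]
  have hZ := hS.zeroRow u
  have h := Matrix.apply_eq_mul_sum_of_eq_off_row
    (hS.summable_smul_pow hx₀ hx₁).tsum_pow_mul_one_sub
    (hZ.summable_smul_pow hx₀ hx₁).one_sub_mul_tsum_pow (by ext j; simp [_root_.zeroRow])
    (fun i hi => by ext j; simp [_root_.zeroRow, hi]) hvu
  simp only [hS.PPR_eq_mul_tsum_apply hα, hZ.PPR_eq_mul_tsum_apply hα, h, Finset.mul_sum]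
  exact Finset.sum_congr rfl fun _ _ => by ring

end RowSubstochastic

section RenormalizedDeletion

variable {V : Type*} [Fintype V] [DecidableEq V] (W : Matrix V V ℝ) (u : V) (A : Finset V)

theorem zeroRow_renormDel : zeroRow (renormDel W u A) u = zeroRow W u := by
  ext n m
  by_cases h : n = u <;> simp [zeroRow, renormDel, h]

theorem sum_renormDel_row_mul (f : V → ℝ) :
    ∑ k, renormDel W u A u k * f k =
      (∑ k ∈ Aᶜ, W u k * f k) / (1 - ∑ m ∈ A, W u m) := by
  rw [← Finset.sum_add_sum_compl A, Finset.sum_div,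
    Finset.sum_eq_zero fun k hk => by simp [renormDel, hk], zero_add]
  exact Finset.sum_congr rfl fun k hk => by
    simp [renormDel, Finset.mem_compl.1 hk, div_mul_eq_mul_div]

variable {W u A}

theorem RowStochastic.renormDel (hW : RowStochastic W) (hσ : ∑ m ∈ A, W u m < 1) :
    RowStochastic (renormDel W u A) := by
  have hσ' : 0 < 1 - ∑ m ∈ A, W u m := by linarith
  refine ⟨fun i j => ?_, fun i => ?_⟩
  · unfold _root_.renormDel
    split_ifs
    exacts [le_rfl, div_nonneg (hW.1 u j) hσ'.le, hW.1 i j]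
  · by_cases hi : i = u
    · subst hi
      have hrow := sum_renormDel_row_mul W i A 1
      have hcompl := Finset.sum_add_sum_compl A (W i)
      simp only [Pi.one_apply, mul_one] at hrow
      rw [hrow, div_eq_one_iff_eq hσ'.ne', ← hW.2 i]
      linarith
    · simpa [_root_.renormDel, hi] using hW.2 i

theorem PPR_renormDel_eq_mul_sum (hW : RowStochastic W) (hσ : ∑ m ∈ A, W u m < 1) {α : ℝ}
    (hα : α ∈ Set.Ioo (0 : ℝ) 1) {v : V} (hvu : v ≠ u) :
    PPR (renormDel W u A) α u v = (1 - α) * PPR (renormDel W u A) α u u /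
      (α * (1 - ∑ m ∈ A, W u m)) * ∑ n ∈ Aᶜ, W u n * PPR (zeroRow W u) α n v := by
  have h := (hW.renormDel hσ).rowSubstochastic.PPR_eq_sum_PPR_zeroRow hα hvu
  rw [zeroRow_renormDel, sum_renormDel_row_mul] at h
  have hα₀ := hα.1.ne'
  have hσ₀ : 1 - ∑ m ∈ A, W u m ≠ 0 := by linarith
  apply mul_left_cancel₀ hα₀
  rw [h]
  field_simp

end RenormalizedDeletion

theorem ppr_swap_equivalence_general
    {V : Type*} [Fintype V] [DecidableEq V] (W : Matrix V V ℝ)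
    (hW : RowStochastic W) (α : ℝ) (hα : α ∈ Set.Ioo (0 : ℝ) 1)
    (u : V)
    (A : Finset V) (hσ : ∑ m ∈ A, W u m < 1) :
    ∀ rec recStar : V, rec ≠ u → recStar ≠ u → W u rec = 0 → W u recStar = 0 →
      (PPR (renormDel W u A) α u rec < PPR (renormDel W u A) α u recStar ↔
        ∑ n ∈ Aᶜ,
          W u n * (PPR (zeroRow W u) α n rec - PPR (zeroRow W u) α n recStar) < 0) := by
  intro rec recStar hrec hrecStar _ _
  have hc : 0 < (1 - α) * PPR (renormDel W u A) α u u / (α * (1 - ∑ m ∈ A, W u m)) :=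
    div_pos (mul_pos (by linarith [hα.2])
      (hα.1.trans_le ((hW.renormDel hσ).rowSubstochastic.le_PPR_self hα u)))
      (mul_pos hα.1 (by linarith))
  rw [PPR_renormDel_eq_mul_sum hW hσ hα hrec, PPR_renormDel_eq_mul_sum hW hσ hα hrecStar,
    mul_lt_mul_iff_right₀ hc, ← sub_neg, ← Finset.sum_sub_distrib]
  simp only [mul_sub]

theorem ppr_swap_equivalence
    {V : Type*} [Fintype V] [DecidableEq V] (W : Matrix V V ℝ)
    (hW : RowStochastic W) (α : ℝ) (hα : α ∈ Set.Ioo (0 : ℝ) 1)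
    (u : V) (hWuu : W u u = 0)
    (A : Finset V) (hσ : ∑ m ∈ A, W u m < 1) :
    ∀ rec recStar : V, rec ≠ u → recStar ≠ u → W u rec = 0 → W u recStar = 0 →
      (PPR (renormDel W u A) α u rec < PPR (renormDel W u A) α u recStar ↔
        ∑ n ∈ Aᶜ,
          W u n * (PPR (zeroRow W u) α n rec - PPR (zeroRow W u) α n recStar) < 0) :=
  ppr_swap_equivalence_general W hW α hα u A hσ
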